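/- arXiv:2107.05048 — 8 statements merged into one kernel-verified Lean document; each statement's English description precedes it below -/
import Mathlib

section
/- On a compact almost Hermitian 2n-manifold, if ∂∂̄ + ∂̄∂ = 0 on A^{n-q,n-p}, then H^{p,q}_{BC} (the kernel of the Bott-Chern Laplacian in bidegree (p,q)) equals the complex conjugate of H^{q,p}_{BC}. -/
/-!
STATEMENT 1: On a compact almost Hermitian 2n-manifold, if ∂∂̄ + ∂̄∂ = 0 on
(n-q,n-p)-forms, then the space of Bott-Chern harmonic (p,q)-forms equals the
complex conjugate of the space of Bott-Chern harmonic (q,p)-forms.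

We model the complex-valued forms as a bigraded complex vector space `V = ⊕ A p q`
with operators ∂, ∂̄, the ℂ-linear Hodge star `star'` (mapping A p q to A (n-q) (n-p)),
and the conjugation `conj` (a conjugate-linear involution mapping A p q to A q p and
intertwining ∂ with ∂̄ and commuting with the star).  On a compact manifold a
(p,q)-form α is Bott-Chern harmonic iff ∂α = 0, ∂̄α = 0 and ∂∂̄(*α) = 0.
-/

theorem bc_harmonic_conjugation
    (n p q : ℤ)
    (V : Type*) [AddCommGroup V] [Module ℂ V]
    (A : ℤ → ℤ → Submodule ℂ V)
    (del delbar star' : V →ₗ[ℂ] V)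
    (conj : V →ₛₗ[starRingEnd ℂ] V)
    (hconj_inv : ∀ x, conj (conj x) = x)
    (hconjA : ∀ p' q' : ℤ, ∀ x ∈ A p' q', conj x ∈ A q' p')
    (hstarA : ∀ p' q' : ℤ, ∀ x ∈ A p' q', star' x ∈ A (n - q') (n - p'))
    (hconj_del : ∀ x, conj (del x) = delbar (conj x))
    (hconj_delbar : ∀ x, conj (delbar x) = del (conj x))
    (hconj_star : ∀ x, conj (star' x) = star' (conj x))
    (hanti : ∀ x ∈ A (n - q) (n - p), del (delbar x) + delbar (del x) = 0) :
    {α | α ∈ A p q ∧ del α = 0 ∧ delbar α = 0 ∧ del (delbar (star' α)) = 0}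
      = conj '' {α | α ∈ A q p ∧ del α = 0 ∧ delbar α = 0 ∧ del (delbar (star' α)) = 0} := by
  ext α
  constructor
  · rintro ⟨hA, hd, hdb, hdd⟩
    refine ⟨conj α, ⟨hconjA _ _ _ hA, ?_, ?_, ?_⟩, hconj_inv α⟩
    · rw [← hconj_delbar, hdb, map_zero]
    · rw [← hconj_del, hd, map_zero]
    · -- delbar (del (star' α)) = 0 from hanti and hdd
      have h1 : delbar (del (star' α)) = 0 := by
        have := hanti (star' α) (hstarA _ _ _ hA)
        rw [hdd, zero_add] at this; exact this
      rw [← hconj_star, ← hconj_del, ← hconj_delbar, h1, map_zero]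
  · rintro ⟨β, ⟨hA, hd, hdb, hdd⟩, rfl⟩
    refine ⟨hconjA _ _ _ hA, ?_, ?_, ?_⟩
    · rw [← hconj_delbar, hdb, map_zero]
    · rw [← hconj_del, hd, map_zero]
    · have hA' : star' (conj β) ∈ A (n - q) (n - p) := hstarA _ _ _ (hconjA _ _ _ hA)
      have h2 : delbar (del (star' (conj β))) = 0 := by
        rw [← hconj_star, ← hconj_delbar, ← hconj_del, hdd, map_zero]
      have := hanti _ hA'
      rw [h2, add_zero] at this; exact this
end

section
/- On a compact almost Hermitian manifold, a (p,q)-form α satisfies Δ̃_BC α = 0 if and only if ∂α = 0, ∂̄α = 0, and ∂∂̄(*α) = 0, where * is the C-linear Hodge star operator. -/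
/-!
Forms are modelled as a bigraded complex inner product space (the L² product of the compact
manifold), with ∂, ∂̄, the ℂ-linear Hodge star, the formal adjoints ∂* = -*∂̄*, ∂̄* = -*∂*
(adjointness is integration by parts), and ** = (-1)^{p+q} on (p,q)-forms.

Each of the six terms of Δ̃_BC has the form T*T, so ⟪Δ̃_BC α, α⟫ is the sum of the squared norms
of ∂̄*∂*α, ∂∂̄α, ∂̄*∂α, ∂*∂̄α, ∂α, ∂̄α. Hence Δ̃_BC α = 0 iff ∂α = ∂̄α = 0 and ∂̄*∂*α = 0.
Finally ∂̄*∂*α = *∂**∂̄*α = ±*∂∂̄*α, and * is injective on each bidegree since ** = ±1.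
-/

noncomputable section

variable {V : Type*} [NormedAddCommGroup V] [InnerProductSpace ℂ V]

/-- The formal adjoint ∂* = -*∂̄*. -/
def delStar (star' delbar : V →ₗ[ℂ] V) : V →ₗ[ℂ] V := -(star' ∘ₗ delbar ∘ₗ star')

/-- The formal adjoint ∂̄* = -*∂*. -/
def delbarStar (star' del : V →ₗ[ℂ] V) : V →ₗ[ℂ] V := -(star' ∘ₗ del ∘ₗ star')

/-- The Bott-Chern Laplacian
Δ̃_BC = ∂∂̄∂̄*∂* + ∂̄*∂*∂∂̄ + ∂*∂̄∂̄*∂ + ∂̄*∂∂*∂̄ + ∂*∂ + ∂̄*∂̄. -/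
def BCLap (del delbar star' : V →ₗ[ℂ] V) : V →ₗ[ℂ] V :=
  del ∘ₗ delbar ∘ₗ delbarStar star' del ∘ₗ delStar star' delbar
  + delbarStar star' del ∘ₗ delStar star' delbar ∘ₗ del ∘ₗ delbar
  + delStar star' delbar ∘ₗ delbar ∘ₗ delbarStar star' del ∘ₗ del
  + delbarStar star' del ∘ₗ del ∘ₗ delStar star' delbar ∘ₗ delbar
  + delStar star' delbar ∘ₗ del
  + delbarStar star' del ∘ₗ delbar

end

theorem LinearMap.apply_eq_zero_iff_of_apply_apply_eq_smul {K M : Type*} [Field K]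
    [AddCommGroup M] [Module K M] (f : M →ₗ[K] M) {x : M} {c : K} (hc : c ≠ 0)
    (hff : f (f x) = c • x) : f x = 0 ↔ x = 0 := by
  refine ⟨fun hfx => ?_, fun hx => by rw [hx, map_zero]⟩
  rwa [hfx, map_zero, eq_comm, smul_eq_zero, or_iff_right hc] at hff

section FormalAdjoint

variable {V : Type*} [NormedAddCommGroup V] [InnerProductSpace ℂ V]

def IsFormalAdjoint (T T' : V →ₗ[ℂ] V) : Prop :=
  ∀ x y : V, inner ℂ (T x) y = inner ℂ x (T' y)

namespace IsFormalAdjoint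

variable {T T' S S' : V →ₗ[ℂ] V}

theorem symm (h : IsFormalAdjoint T T') : IsFormalAdjoint T' T := fun x y => by
  rw [← inner_conj_symm, ← h, inner_conj_symm]

theorem comp (hT : IsFormalAdjoint T T') (hS : IsFormalAdjoint S S') :
    IsFormalAdjoint (T ∘ₗ S) (S' ∘ₗ T') := fun x y => by
  rw [LinearMap.comp_apply, LinearMap.comp_apply, hT, hS]

theorem inner_apply_apply_self (h : IsFormalAdjoint T T') (x : V) :
    inner ℂ (T' (T x)) x = (‖T x‖ : ℂ) ^ 2 := by
  rw [h.symm, inner_self_eq_norm_sq_to_K, RCLike.ofReal_eq_complex_ofReal]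

end IsFormalAdjoint

end FormalAdjoint

section BottChern

variable {V : Type*} [NormedAddCommGroup V] [InnerProductSpace ℂ V] (del delbar star' : V →ₗ[ℂ] V)

local notation "∂*" => delStar star' delbar
local notation "∂̄*" => delbarStar star' del

theorem inner_BCLap_self (hdel : IsFormalAdjoint del ∂*) (hdelbar : IsFormalAdjoint delbar ∂̄*)
    (α : V) :
    inner ℂ (BCLap del delbar star' α) α =
      ((‖∂̄* (∂* α)‖ ^ 2 + ‖del (delbar α)‖ ^ 2 + ‖∂̄* (del α)‖ ^ 2 + ‖∂* (delbar α)‖ ^ 2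
        + ‖del α‖ ^ 2 + ‖delbar α‖ ^ 2 : ℝ) : ℂ) := by
  have h₁ := (hdelbar.symm.comp hdel.symm).inner_apply_apply_self α
  have h₂ := (hdel.comp hdelbar).inner_apply_apply_self α
  have h₃ := (hdelbar.symm.comp hdel).inner_apply_apply_self α
  have h₄ := (hdel.symm.comp hdelbar).inner_apply_apply_self α
  have h₅ := hdel.inner_apply_apply_self α
  have h₆ := hdelbar.inner_apply_apply_self α
  simp only [LinearMap.comp_apply] at h₁ h₂ h₃ h₄
  simp only [BCLap, LinearMap.add_apply, LinearMap.comp_apply, inner_add_left,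
    h₁, h₂, h₃, h₄, h₅, h₆]
  push_cast
  ring

theorem BCLap_eq_zero_iff (hdel : IsFormalAdjoint del ∂*) (hdelbar : IsFormalAdjoint delbar ∂̄*)
    (α : V) :
    BCLap del delbar star' α = 0 ↔ del α = 0 ∧ delbar α = 0 ∧ ∂̄* (∂* α) = 0 := by
  constructor
  · intro h
    have hsum := inner_BCLap_self del delbar star' hdel hdelbar α
    rw [h, inner_zero_left, eq_comm, Complex.ofReal_eq_zero] at hsum
    have hsq : ∀ v : V, ‖v‖ ^ 2 = 0 → v = 0 := fun v hv =>
      norm_eq_zero.mp ((pow_eq_zero_iff two_ne_zero).mp hv)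
    refine ⟨hsq _ ?_, hsq _ ?_, hsq _ ?_⟩ <;>
      linarith [sq_nonneg ‖∂̄* (∂* α)‖, sq_nonneg ‖del (delbar α)‖, sq_nonneg ‖∂̄* (del α)‖,
        sq_nonneg ‖∂* (delbar α)‖, sq_nonneg ‖del α‖, sq_nonneg ‖delbar α‖]
  · rintro ⟨hdα, hdbα, hdbsdsα⟩
    simp [BCLap, hdα, hdbα, hdbsdsα]

theorem delbarStar_delStar_apply (α : V) :
    ∂̄* (∂* α) = star' (del (star' (star' (delbar (star' α))))) := by
  simp [delStar, delbarStar]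

end BottChern

theorem bc_laplacian_kernel_characterization
    (V : Type*) [NormedAddCommGroup V] [InnerProductSpace ℂ V]
    (n p q : ℤ)
    (A : ℤ → ℤ → Submodule ℂ V)
    (del delbar star' : V →ₗ[ℂ] V)
    (hdel : ∀ p' q' : ℤ, ∀ x ∈ A p' q', del x ∈ A (p' + 1) q')
    (hdelbar : ∀ p' q' : ℤ, ∀ x ∈ A p' q', delbar x ∈ A p' (q' + 1))
    (hstarA : ∀ p' q' : ℤ, ∀ x ∈ A p' q', star' x ∈ A (n - q') (n - p'))
    (hstarstar : ∀ p' q' : ℤ, ∀ x ∈ A p' q', star' (star' x) = ((-1 : ℂ) ^ (p' + q')) • x)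
    (hadj_del : ∀ x y : V, (inner ℂ (del x) y : ℂ) = inner ℂ x (delStar star' delbar y))
    (hadj_delbar : ∀ x y : V, (inner ℂ (delbar x) y : ℂ) = inner ℂ x (delbarStar star' del y)) :
    ∀ α ∈ A p q,
      (BCLap del delbar star' α = 0 ↔
        del α = 0 ∧ delbar α = 0 ∧ del (delbar (star' α)) = 0) := by
  intro α hα
  have hsign : ∀ k : ℤ, (-1 : ℂ) ^ k ≠ 0 := fun k => zpow_ne_zero k (by norm_num)
  have hdelbarstar : delbar (star' α) ∈ A (n - q) (n - p + 1) := hdelbar _ _ _ (hstarA p q α hα)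
  have hstar_injective := star'.apply_eq_zero_iff_of_apply_apply_eq_smul (hsign _)
    (hstarstar _ _ _ (hdel _ _ _ hdelbarstar))
  rw [BCLap_eq_zero_iff del delbar star' hadj_del hadj_delbar, delbarStar_delStar_apply,
    hstarstar _ _ _ hdelbarstar, map_smul, map_smul, smul_eq_zero, or_iff_right (hsign _),
    hstar_injective]
end

section
/- On the Kodaira-Thurston manifold with almost Kähler structure (J_b, ω_b), the space of Bott-Chern harmonic (0,1)-forms is the one-dimensional space C·φ̄¹, for every b ∈ R\{0}. -/
/-!
STATEMENT 13: On the Kodaira-Thurston manifold with the almost Kähler structure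
(J_b, ω_b), the space of Bott-Chern harmonic (0,1)-forms is ℂ·φ̄¹ for every
b ∈ ℝ\{0}.

Model: functions on the Kodaira-Thurston manifold are smooth functions on ℝ⁴
(coordinates (t,x,y,z)) invariant under the lattice action
(t,x,y,z) ↦ (t+t₀, x+x₀, y+y₀, z+z₀+x₀y), t₀,x₀,y₀,z₀ ∈ ℤ.  The frame vector
fields are V₁ = ½(∂t − i∂x), V₂ = ½((∂y + x∂z) + (i/b)∂z), with conjugates V̄₁, V̄₂.
A (0,1)-form s = fφ̄¹ + gφ̄² is Bott-Chern harmonic iff ∂s = 0 and ∂̄s = 0, i.e.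
V₁(f) = 0, V₂(g) = 0, V₁(g) − (b/4)g = 0, V₂(f) − (b/4)g = 0,
−V̄₂(f) + V̄₁(g) + (b/4)g = 0.  Conclusion: f is constant and g = 0, and conversely.
-/

noncomputable section KT

/-- partial derivative in t. -/
def pt (f : ℝ × ℝ × ℝ × ℝ → ℂ) (p : ℝ × ℝ × ℝ × ℝ) : ℂ := fderiv ℝ f p (1, 0, 0, 0)
/-- partial derivative in x. -/
def px (f : ℝ × ℝ × ℝ × ℝ → ℂ) (p : ℝ × ℝ × ℝ × ℝ) : ℂ := fderiv ℝ f p (0, 1, 0, 0)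
/-- partial derivative in y. -/
def py (f : ℝ × ℝ × ℝ × ℝ → ℂ) (p : ℝ × ℝ × ℝ × ℝ) : ℂ := fderiv ℝ f p (0, 0, 1, 0)
/-- partial derivative in z. -/
def pz (f : ℝ × ℝ × ℝ × ℝ → ℂ) (p : ℝ × ℝ × ℝ × ℝ) : ℂ := fderiv ℝ f p (0, 0, 0, 1)

/-- V₁ = ½(∂t − i∂x). -/
def V1 (f : ℝ × ℝ × ℝ × ℝ → ℂ) (p : ℝ × ℝ × ℝ × ℝ) : ℂ :=
  (1/2 : ℂ) * (pt f p - Complex.I * px f p)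
/-- V₂ = ½((∂y + x∂z) + (i/b)∂z). -/
def V2 (b : ℝ) (f : ℝ × ℝ × ℝ × ℝ → ℂ) (p : ℝ × ℝ × ℝ × ℝ) : ℂ :=
  (1/2 : ℂ) * ((py f p + (p.2.1 : ℂ) * pz f p) + (Complex.I / (b : ℂ)) * pz f p)
/-- V̄₁ = ½(∂t + i∂x). -/
def V1bar (f : ℝ × ℝ × ℝ × ℝ → ℂ) (p : ℝ × ℝ × ℝ × ℝ) : ℂ :=
  (1/2 : ℂ) * (pt f p + Complex.I * px f p)
/-- V̄₂ = ½((∂y + x∂z) − (i/b)∂z). -/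
def V2bar (b : ℝ) (f : ℝ × ℝ × ℝ × ℝ → ℂ) (p : ℝ × ℝ × ℝ × ℝ) : ℂ :=
  (1/2 : ℂ) * ((py f p + (p.2.1 : ℂ) * pz f p) - (Complex.I / (b : ℂ)) * pz f p)

/-- Invariance under the Kodaira-Thurston lattice. -/
def KTInv (f : ℝ × ℝ × ℝ × ℝ → ℂ) : Prop :=
  ∀ (t₀ x₀ y₀ z₀ : ℤ) (t x y z : ℝ),
    f (t + t₀, x + x₀, y + y₀, z + z₀ + x₀ * y) = f (t, x, y, z)

end KT

/-! ### Auxiliary lemmas -/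

noncomputable section KTAux

private lemma kt_diffAt {f : ℝ × ℝ × ℝ × ℝ → ℂ} (hf : ContDiff ℝ (⊤ : ℕ∞) f) (p : ℝ × ℝ × ℝ × ℝ) :
    DifferentiableAt ℝ f p := (hf.differentiable (by simp)).differentiableAt

private lemma kt_dir_contDiff {f : ℝ × ℝ × ℝ × ℝ → ℂ} (hf : ContDiff ℝ (⊤ : ℕ∞) f)
    (v : ℝ × ℝ × ℝ × ℝ) : ContDiff ℝ (⊤ : ℕ∞) (fun q => fderiv ℝ f q v) :=
  (ContinuousLinearMap.apply ℝ ℂ v).contDiff.comp (hf.fderiv_right (by simp))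

/-- Symmetry of second derivatives in fixed directions. -/
private lemma kt_symm {f : ℝ × ℝ × ℝ × ℝ → ℂ} (hf : ContDiff ℝ (⊤ : ℕ∞) f) (p v w : ℝ × ℝ × ℝ × ℝ) :
    fderiv ℝ (fun q => fderiv ℝ f q v) p w = fderiv ℝ (fun q => fderiv ℝ f q w) p v := by
  have hdf : ContDiff ℝ (⊤ : ℕ∞) (fderiv ℝ f) := hf.fderiv_right (by simp)
  have hdp : DifferentiableAt ℝ (fderiv ℝ f) p := (hdf.differentiable (by simp)).differentiableAt
  have key : ∀ u : ℝ × ℝ × ℝ × ℝ,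
      fderiv ℝ (fun q => fderiv ℝ f q u) p = (fderiv ℝ (fderiv ℝ f) p).flip u := by
    intro u
    have := fderiv_clm_apply (c := fderiv ℝ f) (u := fun _ => u) hdp (differentiableAt_const u)
    simpa using this
  rw [key v, key w]
  have hsymm := second_derivative_symmetric (f := f) (f' := fderiv ℝ f)
    (f'' := fderiv ℝ (fderiv ℝ f) p)
    (fun y => ((hf.differentiable (by simp)) y).hasFDerivAt) hdp.hasFDerivAt
  simpa using (hsymm w v)

/-- Directional derivative of a linear combination of two functions. -/
private lemma kt_comb {h₁ h₂ : ℝ × ℝ × ℝ × ℝ → ℂ} {p : ℝ × ℝ × ℝ × ℝ}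
    (hd₁ : DifferentiableAt ℝ h₁ p) (hd₂ : DifferentiableAt ℝ h₂ p) (a₁ a₂ : ℂ)
    (v : ℝ × ℝ × ℝ × ℝ) :
    fderiv ℝ (fun q => a₁ * h₁ q + a₂ * h₂ q) p v
      = a₁ * fderiv ℝ h₁ p v + a₂ * fderiv ℝ h₂ p v := by
  rw [fderiv_fun_add (hd₁.const_mul a₁) (hd₂.const_mul a₂), fderiv_const_mul hd₁, fderiv_const_mul hd₂]
  simp

private lemma kt_line {f : ℝ × ℝ × ℝ × ℝ → ℂ} (hf : ContDiff ℝ (⊤ : ℕ∞) f) (p v : ℝ × ℝ × ℝ × ℝ)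
    (s : ℝ) : HasDerivAt (fun s : ℝ => f (p + s • v)) (fderiv ℝ f (p + s • v) v) s := by
  have hline : HasDerivAt (fun s : ℝ => p + s • v) v s := by
    simpa using ((hasDerivAt_id s).smul_const v).const_add p
  exact ((kt_diffAt hf _).hasFDerivAt.comp_hasDerivAt s hline)

private lemma kt_const_line {f : ℝ × ℝ × ℝ × ℝ → ℂ} (hf : ContDiff ℝ (⊤ : ℕ∞) f)
    {v : ℝ × ℝ × ℝ × ℝ} (hv : ∀ q, fderiv ℝ f q v = 0) (p : ℝ × ℝ × ℝ × ℝ) (s : ℝ) :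
    f (p + s • v) = f p := by
  have hd : ∀ s : ℝ, HasDerivAt (fun s : ℝ => f (p + s • v)) 0 s := fun s => by
    simpa [hv] using kt_line hf p v s
  have := is_const_of_deriv_eq_zero (f := fun s : ℝ => f (p + s • v))
    (fun s => (hd s).differentiableAt) (fun s => (hd s).deriv) s 0
  simpa using this

/-- A periodic solution of h' = c h with exp c ≠ 1 vanishes. -/
private lemma kt_ode {c : ℂ} (hc : Complex.exp c ≠ 1) (h : ℝ → ℂ)
    (hd : ∀ t, HasDerivAt h (c * h t) t) (hper : ∀ t : ℝ, h (t + 1) = h t) :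
    ∀ t, h t = 0 := by
  have hE : ∀ t : ℝ, HasDerivAt (fun s : ℝ => Complex.exp (-(c * s)))
      (-c * Complex.exp (-(c * t))) t := by
    intro t
    have h0 : HasDerivAt (fun w : ℂ => -(c * w)) (-c) (t : ℂ) := by
      simpa using ((hasDerivAt_id (t : ℂ)).const_mul c).fun_neg
    have h1 : HasDerivAt (fun w : ℂ => Complex.exp (-(c * w)))
        (Complex.exp (-(c * (t : ℂ))) * (-c)) (t : ℂ) := h0.cexp
    simpa [mul_comm] using h1.comp_ofReal
  have hH' : ∀ t : ℝ, HasDerivAt (fun t : ℝ => Complex.exp (-(c * t)) * h t) 0 t := by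
    intro t
    have := (hE t).fun_mul (hd t)
    exact this.congr_deriv (by ring)
  have hconst : ∀ t : ℝ, Complex.exp (-(c * t)) * h t = h 0 := by
    intro t
    have := is_const_of_deriv_eq_zero (f := fun t : ℝ => Complex.exp (-(c * t)) * h t)
      (fun s => (hH' s).differentiableAt) (fun s => (hH' s).deriv) t 0
    simpa using this
  have hform : ∀ t : ℝ, h t = Complex.exp (c * t) * h 0 := by
    intro t
    calc h t = Complex.exp (c * t) * (Complex.exp (-(c * t)) * h t) := by
          rw [← mul_assoc, ← Complex.exp_add]; simp
      _ = Complex.exp (c * t) * h 0 := by rw [hconst t]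
  have h1 : Complex.exp c * h 0 = h 0 := by
    have h2 := hper 0
    norm_num at h2
    rw [hform 1] at h2
    push_cast at h2
    simpa using h2
  have h0 : h 0 = 0 := by
    rcases mul_eq_zero.mp (show (Complex.exp c - 1) * h 0 = 0 by linear_combination h1) with h' | h'
    · exact absurd (by linear_combination h' : Complex.exp c = 1) hc
    · exact h'
  intro t
  rw [hform t, h0, mul_zero]

/-- The real-linear embedding w ↦ (Re w, −Im w, 0, 0). -/
private def kt_iota : ℂ →L[ℝ] ℝ × ℝ × ℝ × ℝ :=
  Complex.reCLM.prod ((-Complex.imCLM).prod ((0 : ℂ →L[ℝ] ℝ).prod 0))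

private lemma kt_iota_apply (w : ℂ) : kt_iota w = (w.re, -w.im, 0, 0) := rfl

/-- A smooth function on ℝ⁴ satisfying ∂t f = i ∂x f is complex differentiable along
the (t, -x)-plane. -/
private lemma kt_holo {f : ℝ × ℝ × ℝ × ℝ → ℂ} (hf : ContDiff ℝ (⊤ : ℕ∞) f)
    (hCR : ∀ p, fderiv ℝ f p ((1:ℝ),(0:ℝ),(0:ℝ),(0:ℝ)) =
      Complex.I * fderiv ℝ f p ((0:ℝ),(1:ℝ),(0:ℝ),(0:ℝ))) :
    Differentiable ℂ (fun w => f (kt_iota w)) := by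
  intro w
  have hreal : HasFDerivAt (fun w => f (kt_iota w))
      ((fderiv ℝ f (kt_iota w)).comp kt_iota) w :=
    (kt_diffAt hf _).hasFDerivAt.comp w kt_iota.hasFDerivAt
  set c' := fderiv ℝ f (kt_iota w) ((1:ℝ),(0:ℝ),(0:ℝ),(0:ℝ)) with hc'
  have heq : ((1 : ℂ →L[ℂ] ℂ).smulRight c').restrictScalars ℝ
      = (fderiv ℝ f (kt_iota w)).comp kt_iota := by
    apply ContinuousLinearMap.ext
    intro z
    have hvec : ((z.re : ℝ), -z.im, (0:ℝ), (0:ℝ))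
        = z.re • ((1:ℝ),(0:ℝ),(0:ℝ),(0:ℝ)) + (-z.im) • ((0:ℝ),(1:ℝ),(0:ℝ),(0:ℝ)) := by
      simp [Prod.ext_iff]
    have hL : ((fderiv ℝ f (kt_iota w)).comp kt_iota) z
        = (z.re : ℂ) * fderiv ℝ f (kt_iota w) ((1:ℝ),(0:ℝ),(0:ℝ),(0:ℝ))
          + (-z.im : ℂ) * fderiv ℝ f (kt_iota w) ((0:ℝ),(1:ℝ),(0:ℝ),(0:ℝ)) := by
      show fderiv ℝ f (kt_iota w) (kt_iota z) = _
      rw [kt_iota_apply z, hvec, map_add, map_smul, map_smul]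
      simp [Complex.real_smul]
    have hR : (((1 : ℂ →L[ℂ] ℂ).smulRight c').restrictScalars ℝ) z = z * c' := by
      simp [ContinuousLinearMap.smulRight_apply, smul_eq_mul]
    rw [hL, hR, hc']
    have hcr := hCR (kt_iota w)
    have hz := Complex.re_add_im z
    linear_combination ((z.im:ℂ) * Complex.I) * hcr
      - (fderiv ℝ f (kt_iota w) ((1:ℝ),(0:ℝ),(0:ℝ),(0:ℝ))) * hz
      + ((z.im:ℂ) * fderiv ℝ f (kt_iota w) ((0:ℝ),(1:ℝ),(0:ℝ),(0:ℝ))) * Complex.I_mul_I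
  exact (hasFDerivAt_of_restrictScalars ℝ hreal heq).differentiableAt

end KTAux

set_option maxHeartbeats 2000000 in
theorem kodaira_thurston_bc_harmonic_01
    (b : ℝ) (hb : b ≠ 0)
    (f g : ℝ × ℝ × ℝ × ℝ → ℂ)
    (hf : ContDiff ℝ (⊤ : ℕ∞) f) (hg : ContDiff ℝ (⊤ : ℕ∞) g)
    (hfI : KTInv f) (hgI : KTInv g) :
    ((∀ p, V1 f p = 0) ∧ (∀ p, V2 b g p = 0) ∧
     (∀ p, V1 g p - ((b : ℂ)/4) * g p = 0) ∧
     (∀ p, V2 b f p - ((b : ℂ)/4) * g p = 0) ∧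
     (∀ p, -V2bar b f p + V1bar g p + ((b : ℂ)/4) * g p = 0))
    ↔ ((∃ c : ℂ, f = fun _ => c) ∧ g = fun _ => 0) := by
  have hbc : (b : ℂ) ≠ 0 := Complex.ofReal_ne_zero.2 hb
  constructor
  · rintro ⟨H1, _H2, H3, H4, H5⟩
    simp only [V1, V2, V1bar, V2bar, pt, px, py, pz] at H1 H3 H4 H5
    -- notation for the four directional derivatives
    set et : ℝ × ℝ × ℝ × ℝ := (1, 0, 0, 0) with het
    set ex : ℝ × ℝ × ℝ × ℝ := (0, 1, 0, 0) with hex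
    set ey : ℝ × ℝ × ℝ × ℝ := (0, 0, 1, 0) with hey
    set ez : ℝ × ℝ × ℝ × ℝ := (0, 0, 0, 1) with hez
    -- Step 1 : Cauchy-Riemann for f
    have hCRf : ∀ p, fderiv ℝ f p et = Complex.I * fderiv ℝ f p ex := by
      intro p; linear_combination 2 * H1 p
    -- Step 2 : pz f in terms of first derivatives of g
    have hpzf : ∀ p, fderiv ℝ f p ez
        = (Complex.I * b / 2) * fderiv ℝ g p et - ((b : ℂ) / 2) * fderiv ℝ g p ex := by
      intro p
      have d : Complex.I / (b : ℂ) * fderiv ℝ f p ez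
          = -(1/2) * fderiv ℝ g p et - (1/2) * Complex.I * fderiv ℝ g p ex := by
        linear_combination H4 p + H5 p
      have d2 : Complex.I * fderiv ℝ f p ez
          = (-(1/2) * fderiv ℝ g p et - (1/2) * Complex.I * fderiv ℝ g p ex) * (b : ℂ) := by
        rw [div_mul_eq_mul_div, div_eq_iff hbc] at d
        exact d
      linear_combination (-Complex.I) * d2
        + (fderiv ℝ f p ez + (b : ℂ)/2 * fderiv ℝ g p ex) * Complex.I_mul_I
    -- differentiability of the directional derivatives
    have hdf : ∀ v p, DifferentiableAt ℝ (fun q => fderiv ℝ f q v) p :=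
      fun v p => kt_diffAt (kt_dir_contDiff hf v) p
    have hdg : ∀ v p, DifferentiableAt ℝ (fun q => fderiv ℝ g q v) p :=
      fun v p => kt_diffAt (kt_dir_contDiff hg v) p
    -- Step 3 : V₁ (∂z f) = 0, expressed via g   (second derivatives of g)
    have hstep3 : ∀ p, fderiv ℝ (fun q => fderiv ℝ g q et) p et
        = - fderiv ℝ (fun q => fderiv ℝ g q ex) p ex := by
      intro p
      -- ∂t(∂z f) = I ∂x(∂z f)
      have hA : fderiv ℝ (fun q => fderiv ℝ f q ez) p et
          = Complex.I * fderiv ℝ (fun q => fderiv ℝ f q ez) p ex := by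
        rw [kt_symm hf p ez et, kt_symm hf p ez ex]
        have hfun : (fun q => fderiv ℝ f q et)
            = fun q => Complex.I * fderiv ℝ f q ex + (0:ℂ) * fderiv ℝ f q ex := by
          funext q; rw [hCRf q]; ring
        rw [hfun, kt_comb (hdf ex p) (hdf ex p) Complex.I 0 ez]
        ring
      -- rewrite ∂z f via g
      have hfun2 : (fun q => fderiv ℝ f q ez)
          = fun q => (Complex.I * b / 2) * fderiv ℝ g q et
              + (-((b : ℂ) / 2)) * fderiv ℝ g q ex := by
        funext q; rw [hpzf q]; ring
      rw [hfun2, kt_comb (hdg et p) (hdg ex p) _ _ et, kt_comb (hdg et p) (hdg ex p) _ _ ex]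
        at hA
    -- use symmetry of the mixed derivative of g
      rw [kt_symm hg p et ex] at hA
      -- now hA is a linear relation among a, m, d; solve for a = -d
      have hIb : Complex.I * (b:ℂ) ≠ 0 := mul_ne_zero Complex.I_ne_zero hbc
      apply mul_left_cancel₀ hIb
      linear_combination 2 * hA
        + ((b:ℂ) * fderiv ℝ (fun q => fderiv ℝ g q ex) p et) * Complex.I_mul_I
    -- Step 4 : V̄₁ g = 0
    have hbar : ∀ p, fderiv ℝ g p et + Complex.I * fderiv ℝ g p ex = 0 := by
      intro p
      -- differentiate the equation V₁ g = (b/4) g in directions t and x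
      have hfun3 : (fun q => fderiv ℝ g q et)
          = fun q => Complex.I * fderiv ℝ g q ex + ((b:ℂ)/2) * g q := by
        funext q
        have := H3 q
        linear_combination 2 * this
      have ht := congrArg (fun F => fderiv ℝ F p et) hfun3
      have hx := congrArg (fun F => fderiv ℝ F p ex) hfun3
      rw [kt_comb (hdg ex p) (kt_diffAt hg p) _ _ et] at ht
      rw [kt_comb (hdg ex p) (kt_diffAt hg p) _ _ ex] at hx
      -- combine:  a + d = (b/2) (∂t g + I ∂x g)
      have hsym := kt_symm hg p et ex
      have hsum : fderiv ℝ (fun q => fderiv ℝ g q et) p et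
            + fderiv ℝ (fun q => fderiv ℝ g q ex) p ex
          = ((b:ℂ)/2) * (fderiv ℝ g p et + Complex.I * fderiv ℝ g p ex) := by
        linear_combination ht + Complex.I * hx - Complex.I * hsym
          + (fderiv ℝ (fun q => fderiv ℝ g q ex) p ex) * Complex.I_mul_I
      rw [hstep3 p] at hsum
      have h0 : ((b:ℂ)/2) * (fderiv ℝ g p et + Complex.I * fderiv ℝ g p ex) = 0 := by
        linear_combination - hsum
      rcases mul_eq_zero.mp h0 with h' | h'
      · exact absurd h' (div_ne_zero hbc two_ne_zero)
      · exact h'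
    -- Step 5 : ∂t g = (b/4) g
    have hptg : ∀ p, fderiv ℝ g p et = ((b:ℂ)/4) * g p := by
      intro p
      linear_combination H3 p + (1/2) * hbar p
    -- Step 6 : g ≡ 0 via the ODE along the t-direction
    have hexp : Complex.exp ((b:ℂ)/4) ≠ 1 := by
      have hcast : ((b:ℂ)/4) = ((b/4 : ℝ) : ℂ) := by push_cast; ring
      rw [hcast, ← Complex.ofReal_exp, Ne, ← Complex.ofReal_one, Complex.ofReal_inj,
        ← Real.exp_zero, Real.exp_eq_exp]
      exact fun h => hb (by linarith)
    have hg0 : ∀ p, g p = 0 := by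
      intro p
      obtain ⟨t, x, y, z⟩ := p
      have harg : ∀ s : ℝ, ((0:ℝ), x, y, z) + s • et = (s, x, y, z) := by
        intro s
        simp [het, Prod.ext_iff]
      have hdh : ∀ s : ℝ, HasDerivAt (fun s : ℝ => g (s, x, y, z))
          (((b:ℂ)/4) * g (s, x, y, z)) s := by
        intro s
        have := kt_line hg ((0:ℝ), x, y, z) et s
        rw [harg s] at this
        have h2 : (fun s : ℝ => g (((0:ℝ), x, y, z) + s • et)) = fun s : ℝ => g (s, x, y, z) := by
          funext s; rw [harg s]
        rw [h2] at this
        rw [hptg (s, x, y, z)] at this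
        exact this
      have hper : ∀ s : ℝ, g (s + 1, x, y, z) = g (s, x, y, z) := by
        intro s
        have := hgI 1 0 0 0 s x y z
        push_cast at this
        simpa using this
      exact kt_ode hexp _ hdh hper t
    -- Step 7 : first derivatives of f in y and z vanish
    have hpzf0 : ∀ p, fderiv ℝ f p ez = 0 := by
      intro p
      rw [hpzf p, hptg p, hg0 p]
      have := hbar p
      have hx0 : Complex.I * fderiv ℝ g p ex = 0 := by
        rw [hptg p, hg0 p] at this
        simpa using this
      have : fderiv ℝ g p ex = 0 := by
        rcases mul_eq_zero.mp hx0 with h' | h'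
        · exact absurd h' Complex.I_ne_zero
        · exact h'
      rw [this]
      ring
    have hpyf0 : ∀ p, fderiv ℝ f p ey = 0 := by
      intro p
      have h4 := H4 p
      rw [hg0 p] at h4
      have hz0 := hpzf0 p
      simp only [het, hex, hey, hez] at hz0 ⊢
      linear_combination 2 * h4 - ((p.2.1 : ℂ) + Complex.I / (b:ℂ)) * hz0
    -- Step 8 : f is independent of y and z
    have hyz : ∀ p : ℝ × ℝ × ℝ × ℝ, f p = f (p.1, p.2.1, 0, 0) := by
      rintro ⟨t, x, y, z⟩
      have h1 : ((t, x, 0, z) : ℝ × ℝ × ℝ × ℝ) + y • ey = (t, x, y, z) := by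
        simp [hey, Prod.ext_iff]
      have h2 : ((t, x, 0, 0) : ℝ × ℝ × ℝ × ℝ) + z • ez = (t, x, 0, z) := by
        simp [hez, Prod.ext_iff]
      calc f (t, x, y, z) = f (t, x, 0, z) := by
            rw [← h1]; exact kt_const_line hf hpyf0 _ _
        _ = f (t, x, 0, 0) := by
            rw [← h2]; exact kt_const_line hf hpzf0 _ _
    -- Step 9 : Liouville for f on the (t,x) plane
    have hF : Differentiable ℂ (fun w => f (kt_iota w)) := kt_holo hf hCRf
    -- boundedness via periodicity
    have hper2 : ∀ t x : ℝ, f (t, x, 0, 0) = f (Int.fract t, Int.fract x, 0, 0) := by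
      intro t x
      have := hfI ⌊t⌋ ⌊x⌋ 0 0 (Int.fract t) (Int.fract x) 0 0
      rw [Int.fract_add_floor, Int.fract_add_floor] at this
      norm_num at this
      exact this
    have hcont : Continuous (fun q : ℝ × ℝ => ‖f (q.1, q.2, 0, 0)‖) := by
      apply Continuous.norm
      exact hf.continuous.comp (continuous_fst.prodMk (continuous_snd.prodMk continuous_const))
    obtain ⟨q₀, hq₀, hmax⟩ := (isCompact_Icc.prod isCompact_Icc :
        IsCompact (Set.Icc (0:ℝ) 1 ×ˢ Set.Icc (0:ℝ) 1)).exists_isMaxOn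
      ⟨(0,0), by norm_num⟩ hcont.continuousOn
    have hbdd : Bornology.IsBounded (Set.range (fun w => f (kt_iota w))) := by
      rw [isBounded_iff_forall_norm_le]
      refine ⟨‖f (q₀.1, q₀.2, 0, 0)‖, ?_⟩
      rintro v ⟨w, rfl⟩
      show ‖f (kt_iota w)‖ ≤ _
      rw [kt_iota_apply, hper2 w.re (-w.im)]
      have hmem : ((Int.fract w.re, Int.fract (-w.im)) : ℝ × ℝ)
          ∈ Set.Icc (0:ℝ) 1 ×ˢ Set.Icc (0:ℝ) 1 := by
        constructor <;> constructor
        · exact Int.fract_nonneg _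
        · exact (Int.fract_lt_one _).le
        · exact Int.fract_nonneg _
        · exact (Int.fract_lt_one _).le
      exact hmax hmem
    have hLiou := hF.apply_eq_apply_of_bounded hbdd
    refine ⟨⟨f (0, 0, 0, 0), ?_⟩, ?_⟩
    · funext p
      have h1 : f p = f (p.1, p.2.1, 0, 0) := hyz p
      have h2 : f (p.1, p.2.1, 0, 0) = f (0, 0, 0, 0) := by
        have := hLiou (Complex.mk p.1 (-p.2.1)) 0
        rw [kt_iota_apply, kt_iota_apply] at this
        simpa using this
      rw [h1, h2]
    · funext p
      exact hg0 p
  · rintro ⟨⟨c, rfl⟩, rfl⟩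
    have hcst : ∀ (d : ℂ) (p : ℝ × ℝ × ℝ × ℝ) (v : ℝ × ℝ × ℝ × ℝ),
        fderiv ℝ (fun _ : ℝ × ℝ × ℝ × ℝ => d) p v = 0 := by
      intro d p v
      rw [fderiv_fun_const]
      rfl
    refine ⟨?_, ?_, ?_, ?_, ?_⟩ <;> intro p <;>
      simp [V1, V2, V1bar, V2bar, pt, px, py, pz, hcst]
end

section
/- On the Kodaira-Thurston manifold with almost Kähler structure (J_b, ω_b) where b = 4πl for a nonzero integer l, the (0,1)-form σ = e^{2πi l x} φ̄² is Dolbeault harmonic (Δ_{∂̄}σ = 0) but not Bott-Chern harmonic; hence H^{0,1}_{BC} is a proper subspace of H^{0,1}_{∂̄}, and there exists an almost Kähler 4-manifold and a bidegree (p,q) with H^{p,q}_{BC} ≠ H^{p,q}_{∂̄}. -/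
open Complex

section FunctionOfX

variable {h : ℝ → ℂ} {p : ℝ × ℝ × ℝ × ℝ}

theorem fderiv_comp_x_apply (hh : DifferentiableAt ℝ h p.2.1) (v : ℝ × ℝ × ℝ × ℝ) :
    fderiv ℝ (fun q : ℝ × ℝ × ℝ × ℝ => h q.2.1) p v = v.2.1 • deriv h p.2.1 := by
  have hx : HasFDerivAt (fun q : ℝ × ℝ × ℝ × ℝ => q.2.1)
      ((ContinuousLinearMap.fst ℝ ℝ (ℝ × ℝ)).comp (ContinuousLinearMap.snd ℝ ℝ (ℝ × ℝ × ℝ))) p :=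
    hasFDerivAt_snd.fst
  have hcomp : HasFDerivAt (fun q : ℝ × ℝ × ℝ × ℝ => h q.2.1) _ p :=
    hh.hasDerivAt.hasFDerivAt.comp p hx
  rw [hcomp.fderiv]
  simp

variable (hh : DifferentiableAt ℝ h p.2.1)
include hh

theorem pt_comp_x : pt (fun q => h q.2.1) p = 0 := by
  simp [pt, fderiv_comp_x_apply hh]

theorem px_comp_x : px (fun q => h q.2.1) p = deriv h p.2.1 := by
  simp [px, fderiv_comp_x_apply hh]

theorem py_comp_x : py (fun q => h q.2.1) p = 0 := by
  simp [py, fderiv_comp_x_apply hh]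

theorem pz_comp_x : pz (fun q => h q.2.1) p = 0 := by
  simp [pz, fderiv_comp_x_apply hh]

theorem V1bar_comp_x : V1bar (fun q => h q.2.1) p = I / 2 * deriv h p.2.1 := by
  rw [V1bar, pt_comp_x hh, px_comp_x hh]
  ring

theorem V2_comp_x (b : ℝ) : V2 b (fun q => h q.2.1) p = 0 := by
  simp [V2, py_comp_x hh, pz_comp_x hh]

theorem V2bar_comp_x (b : ℝ) : V2bar b (fun q => h q.2.1) p = 0 := by
  simp [V2bar, py_comp_x hh, pz_comp_x hh]

end FunctionOfX

theorem deriv_cexp_const_mul_ofReal (c : ℂ) (x : ℝ) :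
    deriv (fun x : ℝ => exp (c * x)) x = c * exp (c * x) := by
  simpa [mul_comm] using (((hasDerivAt_id x).ofReal_comp.const_mul c).cexp).deriv

theorem differentiableAt_cexp_const_mul_ofReal (c : ℂ) (x : ℝ) :
    DifferentiableAt ℝ (fun x : ℝ => exp (c * x)) x :=
  (((hasDerivAt_id x).ofReal_comp.const_mul c).cexp).differentiableAt

theorem kodaira_thurston_dolbeault_ne_bott_chern (l : ℤ) (hl : l ≠ 0) :
    let b : ℝ := 4 * Real.pi * l
    let f : ℝ × ℝ × ℝ × ℝ → ℂ := fun _ => 0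
    let g : ℝ × ℝ × ℝ × ℝ → ℂ :=
      fun p => Complex.exp (2 * (Real.pi : ℂ) * Complex.I * (l : ℂ) * (p.2.1 : ℂ))
    -- σ = fφ̄¹ + gφ̄² is Dolbeault harmonic:
    ((∀ p, V1 f p + V2 b g p = 0) ∧
     (∀ p, -V2bar b f p + V1bar g p + ((b : ℂ)/4) * g p = 0)) ∧
    -- but σ is not Bott-Chern harmonic:
    ¬ ((∀ p, V1 f p = 0) ∧ (∀ p, V2 b g p = 0) ∧
       (∀ p, V1 g p - ((b : ℂ)/4) * g p = 0) ∧
       (∀ p, V2 b f p - ((b : ℂ)/4) * g p = 0) ∧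
       (∀ p, -V2bar b f p + V1bar g p + ((b : ℂ)/4) * g p = 0)) := by
  intro b f g
  set c : ℂ := 2 * Real.pi * I * l
  have hg : ∀ p : ℝ × ℝ × ℝ × ℝ, DifferentiableAt ℝ (fun x : ℝ => exp (c * x)) p.2.1 :=
    fun p => differentiableAt_cexp_const_mul_ofReal c p.2.1
  have hb : (b : ℂ) / 4 = Real.pi * l := by
    simp only [b]
    push_cast
    ring
  have hV1bar_g : ∀ p, V1bar g p = -(Real.pi * l) * g p := fun p => by
    rw [V1bar_comp_x (hg p), deriv_cexp_const_mul_ofReal]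
    linear_combination (Real.pi * l * g p) * I_sq
  have hV2_g : ∀ p, V2 b g p = 0 := fun p => V2_comp_x (hg p) b
  have hV1_f : ∀ p, V1 f p = 0 := fun p => by simp [V1, pt, px, f]
  have hV2_f : ∀ p, V2 b f p = 0 := fun p => by simp [V2, py, pz, f]
  have hV2bar_f : ∀ p, V2bar b f p = 0 := fun p => by simp [V2bar, py, pz, f]
  refine ⟨⟨fun p => ?_, fun p => ?_⟩, ?_⟩
  · rw [hV1_f, hV2_g, add_zero]
  · rw [hV2bar_f, hV1bar_g, hb]
    ring
  · rintro ⟨-, -, -, hV2_f_eq, -⟩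
    have h0 := hV2_f_eq 0
    rw [hV2_f, hb, zero_sub, neg_eq_zero] at h0
    refine mul_ne_zero (mul_ne_zero ?_ ?_) (exp_ne_zero _) h0
    · exact_mod_cast Real.pi_ne_zero
    · exact_mod_cast hl
end

section
/- For the system arising from Bott-Chern harmonic (1,2)-forms on the Kodaira-Thurston manifold: for integers k,l,m and b ≠ 0, if complex numbers f_{k,l,m}, g_{k,l,m}, not both zero, satisfy (16π²(k²+l²) − 8bπl + b²)f + 4πm(4πk − 4πil + ib)g = 0, πm(4πk + 4πil − ib)f + 4π²m²g = 0, and mf = (k − il)g, then k = 0 and 4πm² + 4πl² − bl = 0. -/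
open Complex

/-!
STATEMENT 15: Fourier-mode analysis for Bott-Chern harmonic (1,2)-forms on the
Kodaira-Thurston manifold: for integers k,l,m, real b ≠ 0 and complex numbers
f, g not both zero satisfying the three equations, one has k = 0 and
4πm² + 4πl² − bl = 0.
-/

lemma kt_re_im_aux (x y : ℝ) (h : (x : ℂ) + (y : ℂ) * I = 0) : x = 0 ∧ y = 0 := by
  have hre := congrArg Complex.re h
  have him := congrArg Complex.im h
  simp at hre him
  exact ⟨hre, him⟩

theorem kt_fourier_mode_12
    (k l m : ℤ) (b : ℝ) (hb : b ≠ 0)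
    (f g : ℂ) (hfg : ¬(f = 0 ∧ g = 0))
    (h1 : (16 * (Real.pi : ℂ)^2 * ((k : ℂ)^2 + (l : ℂ)^2) - 8 * (b : ℂ) * (Real.pi : ℂ) * (l : ℂ)
            + (b : ℂ)^2) * f
          + 4 * (Real.pi : ℂ) * (m : ℂ)
            * (4 * (Real.pi : ℂ) * (k : ℂ) - 4 * (Real.pi : ℂ) * I * (l : ℂ) + I * (b : ℂ)) * g
          = 0)
    (h2 : (Real.pi : ℂ) * (m : ℂ)
            * (4 * (Real.pi : ℂ) * (k : ℂ) + 4 * (Real.pi : ℂ) * I * (l : ℂ) - I * (b : ℂ)) * f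
          + 4 * (Real.pi : ℂ)^2 * (m : ℂ)^2 * g = 0)
    (h3 : (m : ℂ) * f = ((k : ℂ) - I * (l : ℂ)) * g) :
    k = 0 ∧ 4 * Real.pi * (m : ℝ)^2 + 4 * Real.pi * (l : ℝ)^2 - b * (l : ℝ) = 0 := by
  have hπ : (Real.pi : ℂ) ≠ 0 := by exact_mod_cast Real.pi_ne_zero
  have hπr := Real.pi_ne_zero
  by_cases hm : (m : ℂ) = 0
  · have hm0 : m = 0 := by exact_mod_cast hm
    subst hm0
    by_cases hg : g = 0
    · have hf : f ≠ 0 := fun hf => hfg ⟨hf, hg⟩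
      have h1' : (16 * (Real.pi : ℂ)^2 * ((k : ℂ)^2 + (l : ℂ)^2)
          - 8 * (b : ℂ) * (Real.pi : ℂ) * (l : ℂ) + (b : ℂ)^2) = 0 := by
        have h1'' : (16 * (Real.pi : ℂ)^2 * ((k : ℂ)^2 + (l : ℂ)^2)
            - 8 * (b : ℂ) * (Real.pi : ℂ) * (l : ℂ) + (b : ℂ)^2) * f = 0 := by
          rw [hg] at h1; linear_combination h1
        exact (mul_eq_zero.mp h1'').resolve_right hf
      have hr : (4*Real.pi*(k:ℝ))^2 + (4*Real.pi*(l:ℝ) - b)^2 = 0 := by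
        have hc : (((4*Real.pi*(k:ℝ))^2 + (4*Real.pi*(l:ℝ) - b)^2 : ℝ) : ℂ) = 0 := by
          push_cast
          linear_combination h1'
        exact_mod_cast hc
      have hk2 : 4*Real.pi*(k:ℝ) = 0 := by nlinarith [sq_nonneg (4*Real.pi*(l:ℝ) - b), sq_nonneg (4*Real.pi*(k:ℝ))]
      have hlb : 4*Real.pi*(l:ℝ) - b = 0 := by nlinarith [sq_nonneg (4*Real.pi*(l:ℝ) - b), sq_nonneg (4*Real.pi*(k:ℝ))]
      have hk : (k:ℝ) = 0 := by
        rcases mul_eq_zero.mp hk2 with h | h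
        · norm_num [hπr] at h
        · exact h
      constructor
      · exact_mod_cast hk
      · push_cast
        nlinarith [hlb]
    · have h3' : ((k:ℂ) - I*(l:ℂ)) * g = 0 := by
        push_cast at h3; linear_combination -h3
      have hkl : (k:ℂ) - I*(l:ℂ) = 0 := (mul_eq_zero.mp h3').resolve_right hg
      have hkl' : (((k:ℝ) : ℝ) : ℂ) + ((-(l:ℝ) : ℝ) : ℂ) * I = 0 := by
        push_cast; linear_combination hkl
      obtain ⟨hk, hl⟩ := kt_re_im_aux _ _ hkl'
      have hl' : (l:ℝ) = 0 := by linarith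
      constructor
      · exact_mod_cast hk
      · push_cast [hl']
        ring
  · have hmz : m ≠ 0 := fun h => hm (by exact_mod_cast h)
    set w : ℂ := 4*(Real.pi:ℂ)*(k:ℂ) + 4*(Real.pi:ℂ)*I*(l:ℂ) - I*(b:ℂ) with hw_def
    by_cases hw : w = 0
    · have hg0 : g = 0 := by
        have h2' : 4 * (Real.pi:ℂ)^2 * (m:ℂ)^2 * g = 0 := by
          rw [hw] at h2; linear_combination h2
        have := mul_eq_zero.mp h2'
        rcases this with h | h
        · exfalso
          rcases mul_eq_zero.mp h with h' | h'
          · rcases mul_eq_zero.mp h' with h'' | h''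
            · norm_num at h''
            · exact hπ (pow_eq_zero_iff (by norm_num) |>.mp h'')
          · exact hm (pow_eq_zero_iff (by norm_num) |>.mp h')
        · exact h
      have hf0 : f = 0 := by
        rw [hg0, mul_zero] at h3
        exact (mul_eq_zero.mp h3).resolve_left hm
      exact absurd ⟨hf0, hg0⟩ hfg
    · have hg : g ≠ 0 := by
        intro hg0
        apply hfg
        refine ⟨?_, hg0⟩
        rw [hg0, mul_zero] at h3
        exact (mul_eq_zero.mp h3).resolve_left hm
      have key' : (Real.pi:ℂ) * (m:ℂ) * ((((k:ℂ) - I*(l:ℂ)) * w + 4*(Real.pi:ℂ)*(m:ℂ)^2) * g) = 0 := by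
        linear_combination (m:ℂ) * h2 - (Real.pi:ℂ) * w * (m:ℂ) * h3
      have key : ((k:ℂ) - I*(l:ℂ)) * w + 4*(Real.pi:ℂ)*(m:ℂ)^2 = 0 := by
        rcases mul_eq_zero.mp key' with h | h
        · exact absurd (mul_eq_zero.mp h) (by simp [hπ, hm])
        · exact (mul_eq_zero.mp h).resolve_right hg
      rw [hw_def] at key
      have keyr : (((4*Real.pi*(k:ℝ)^2 + 4*Real.pi*(l:ℝ)^2 - b*(l:ℝ) + 4*Real.pi*(m:ℝ)^2 : ℝ)) : ℂ)
          + (((-(b*(k:ℝ)) : ℝ)) : ℂ) * I = 0 := by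
        push_cast
        linear_combination key + (4*(Real.pi:ℂ)*(l:ℂ)^2 - (b:ℂ)*(l:ℂ)) * Complex.I_sq
      obtain ⟨hre, him⟩ := kt_re_im_aux _ _ keyr
      have hk : (k:ℝ) = 0 := by
        have hbk : b * (k:ℝ) = 0 := by linarith
        rcases mul_eq_zero.mp hbk with h | h
        · exact absurd h hb
        · exact h
      constructor
      · exact_mod_cast hk
      · have hk2 : 4 * Real.pi * (k:ℝ)^2 = 0 := by rw [hk]; ring
        linarith [hre, hk2]
end

section
/- The number of pairs (l,m) ∈ Z² satisfying 4πm² + 4πl² − bl = 0 equals the number of lattice points on the circle centered at (d,0) of radius d, where d = b/(8π): i.e., the equation is equivalent to m² + (l−d)² = d². Moreover, by appropriate choice of b this number can be made arbitrarily large. -/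
theorem kt_lattice_points_on_circle :
    (∀ b : ℝ, b ≠ 0 → ∀ l m : ℤ,
      (4 * Real.pi * (m : ℝ)^2 + 4 * Real.pi * (l : ℝ)^2 - b * (l : ℝ) = 0 ↔
        (m : ℝ)^2 + ((l : ℝ) - b / (8 * Real.pi))^2 = (b / (8 * Real.pi))^2)) ∧
    (∀ N : ℕ, ∃ b : ℝ, b ≠ 0 ∧
      N ≤ Set.ncard {p : ℤ × ℤ |
        4 * Real.pi * ((p.2 : ℝ))^2 + 4 * Real.pi * ((p.1 : ℝ))^2 - b * ((p.1 : ℝ)) = 0}) := by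
  have hπ : (0:ℝ) < Real.pi := Real.pi_pos
  constructor
  · intro b hb l m
    set d := b / (8 * Real.pi) with hd
    have hbd : b = 8 * Real.pi * d := by rw [hd]; field_simp
    rw [hbd]
    constructor
    · intro h
      have h2 : 4 * Real.pi * ((m:ℝ)^2 + ((l:ℝ) - d)^2 - d^2) = 0 := by linear_combination h
      have h3 : (m:ℝ)^2 + ((l:ℝ) - d)^2 - d^2 = 0 := by
        rcases mul_eq_zero.mp h2 with h4 | h4
        · exact absurd h4 (by positivity)
        · exact h4
      linarith
    · intro h
      linear_combination 4 * Real.pi * h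
  · intro N
    set Q : ℕ → ℤ := fun i => ((i:ℤ)+1)^2 + 1 with hQ
    have hQpos : ∀ i, 0 < Q i := fun i => by simp only [hQ]; positivity
    set L : ℤ := ∏ i ∈ Finset.range N, Q i with hL
    have hLpos : 0 < L := Finset.prod_pos (fun i _ => hQpos i)
    have hLR : (0:ℝ) < (L:ℝ) := by exact_mod_cast hLpos
    refine ⟨4 * Real.pi * (L:ℝ), by positivity, ?_⟩
    have hmem : ∀ p : ℤ × ℤ, (4 * Real.pi * ((p.2 : ℝ))^2 + 4 * Real.pi * ((p.1 : ℝ))^2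
        - 4 * Real.pi * (L:ℝ) * ((p.1 : ℝ)) = 0) ↔ p.2^2 + p.1^2 = L * p.1 := by
      intro p
      constructor
      · intro h
        have h2 : 4 * Real.pi * (((p.2:ℝ))^2 + ((p.1:ℝ))^2 - (L:ℝ) * (p.1:ℝ)) = 0 := by
          linear_combination h
        have h3 : ((p.2:ℝ))^2 + ((p.1:ℝ))^2 - (L:ℝ) * (p.1:ℝ) = 0 := by
          rcases mul_eq_zero.mp h2 with h4 | h4
          · exact absurd h4 (by positivity)
          · exact h4
        have h5 : ((p.2^2 + p.1^2 : ℤ) : ℝ) = ((L * p.1 : ℤ) : ℝ) := by push_cast; linarith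
        exact_mod_cast h5
      · intro h
        have h3 : ((p.2:ℝ))^2 + ((p.1:ℝ))^2 = (L:ℝ) * (p.1:ℝ) := by exact_mod_cast h
        linear_combination 4 * Real.pi * h3
    have hfin : Set.Finite {p : ℤ × ℤ |
        4 * Real.pi * ((p.2 : ℝ))^2 + 4 * Real.pi * ((p.1 : ℝ))^2
          - 4 * Real.pi * (L:ℝ) * ((p.1 : ℝ)) = 0} := by
      apply Set.Finite.subset (Set.finite_Icc ((0:ℤ), -L) (L, L))
      intro p hp
      have h := (hmem p).mp hp
      have h1 : 0 ≤ p.1 := by nlinarith [sq_nonneg p.2, sq_nonneg p.1]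
      have h2 : p.1 ≤ L := by nlinarith [sq_nonneg p.2]
      have h3 : p.2^2 ≤ L^2 := by nlinarith
      simp only [Set.mem_Icc, Prod.le_def]
      refine ⟨⟨h1, ?_⟩, h2, ?_⟩
      · nlinarith [sq_nonneg (p.2 + L), sq_nonneg (p.2 - L)]
      · nlinarith [sq_nonneg (p.2 + L), sq_nonneg (p.2 - L)]
    set f : ℕ → ℤ × ℤ := fun j =>
      (((j:ℤ)+1)^2 * ∏ i ∈ (Finset.range N).erase j, Q i,
       ((j:ℤ)+1) * ∏ i ∈ (Finset.range N).erase j, Q i) with hf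
    have hKpos : ∀ j, 0 < ∏ i ∈ (Finset.range N).erase j, Q i :=
      fun j => Finset.prod_pos (fun i _ => hQpos i)
    have hfmem : ∀ j ∈ Finset.range N, f j ∈ {p : ℤ × ℤ |
        4 * Real.pi * ((p.2 : ℝ))^2 + 4 * Real.pi * ((p.1 : ℝ))^2
          - 4 * Real.pi * (L:ℝ) * ((p.1 : ℝ)) = 0} := by
      intro j hj
      have hLQ : L = Q j * ∏ i ∈ (Finset.range N).erase j, Q i :=
        (Finset.mul_prod_erase _ _ hj).symm
      show 4 * Real.pi * (((f j).2 : ℝ))^2 + 4 * Real.pi * (((f j).1 : ℝ))^2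
          - 4 * Real.pi * (L:ℝ) * (((f j).1 : ℝ)) = 0
      have hid : (f j).2^2 + (f j).1^2 = L * (f j).1 := by
        simp only [hf]
        rw [hLQ]
        simp only [hQ]
        ring
      have hidR : (((f j).2 : ℝ))^2 + (((f j).1 : ℝ))^2 = (L:ℝ) * (((f j).1 : ℝ)) := by
        exact_mod_cast hid
      linear_combination 4 * Real.pi * hidR
    have hinj : Set.InjOn f (Finset.range N) := by
      intro j _ k _ hjk
      have h1 : ((j:ℤ)+1)^2 * ∏ i ∈ (Finset.range N).erase j, Q i
          = ((k:ℤ)+1)^2 * ∏ i ∈ (Finset.range N).erase k, Q i := congrArg Prod.fst hjk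
      have h2 : ((j:ℤ)+1) * ∏ i ∈ (Finset.range N).erase j, Q i
          = ((k:ℤ)+1) * ∏ i ∈ (Finset.range N).erase k, Q i := congrArg Prod.snd hjk
      have hXpos : 0 < ((j:ℤ)+1) * ∏ i ∈ (Finset.range N).erase j, Q i :=
        mul_pos (by positivity) (hKpos j)
      have h3 : ((j:ℤ)+1) * (((j:ℤ)+1) * ∏ i ∈ (Finset.range N).erase j, Q i)
          = ((k:ℤ)+1) * (((j:ℤ)+1) * ∏ i ∈ (Finset.range N).erase j, Q i) := by
        linear_combination h1 - ((k:ℤ)+1) * h2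
      have h4 : ((j:ℤ)+1) = (k:ℤ)+1 := mul_right_cancel₀ hXpos.ne' h3
      have : (j:ℤ) = (k:ℤ) := by linarith
      exact_mod_cast this
    have hsub : ↑(Finset.image f (Finset.range N)) ⊆ {p : ℤ × ℤ |
        4 * Real.pi * ((p.2 : ℝ))^2 + 4 * Real.pi * ((p.1 : ℝ))^2
          - 4 * Real.pi * (L:ℝ) * ((p.1 : ℝ)) = 0} := by
      intro p hp
      simp only [Finset.coe_image, Set.mem_image, Finset.mem_coe] at hp
      obtain ⟨j, hj, rfl⟩ := hp
      exact hfmem j hj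
    calc N = ((Finset.image f (Finset.range N) : Finset (ℤ × ℤ)) : Set (ℤ × ℤ)).ncard := by
          rw [Set.ncard_coe_finset, Finset.card_image_of_injOn hinj, Finset.card_range]
      _ ≤ _ := Set.ncard_le_ncard hsub hfin
end

section
/- On the hyperelliptic surface solvmanifold M = Γ\G with the left invariant coframe e¹,...,e⁴ satisfying de¹ = −π e^{23}, de² = π e^{13}, de³ = 0, de⁴ = 0, the almost Hermitian metric ω = e^{13} + e^{24} satisfies dω = π e^{134} = θ ∧ ω with θ = π e⁴, where θ is closed; moreover, since H¹_{dR}(M) = R⟨e³, e⁴⟩, θ is not exact, so ω is strictly locally conformally almost Kähler. -/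
/-!
STATEMENT 17: On the hyperelliptic surface solvmanifold M = Γ\G with invariant
coframe e¹,…,e⁴ satisfying de¹ = −πe^{23}, de² = πe^{13}, de³ = 0, de⁴ = 0, the
almost Hermitian metric ω = e^{13} + e^{24} satisfies dω = πe^{134} = θ ∧ ω with
θ = πe⁴ closed; since H¹_{dR}(M) = ℝ⟨e³,e⁴⟩, θ is not exact, so ω is strictly
locally conformally almost Kähler.

Model: `Ω` is the algebra of real differential forms (product = wedge), `d` the
exterior differential, e1,…,e4 the invariant coframe (1-forms anticommute, square
to zero, Leibniz rule), `F` the space of smooth functions (0-forms).  That the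
classes of e³ and e⁴ are linearly independent in H¹_{dR} is the hypothesis `hind`.
Conclusions: dω = θ∧ω, dθ = 0, and θ is not exact.
-/

theorem hyperelliptic_strictly_lck
    (Ω : Type*) [Ring Ω] [Algebra ℝ Ω]
    (d : Ω →ₗ[ℝ] Ω)
    (e1 e2 e3 e4 : Ω)
    (F : Submodule ℝ Ω)
    (hsq : ∀ x ∈ ({e1, e2, e3, e4} : Set Ω), x * x = 0)
    (hanti : ∀ x ∈ ({e1, e2, e3, e4} : Set Ω), ∀ y ∈ ({e1, e2, e3, e4} : Set Ω),
      x * y = -(y * x))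
    (hleib : ∀ x ∈ ({e1, e2, e3, e4} : Set Ω), ∀ y ∈ ({e1, e2, e3, e4} : Set Ω),
      d (x * y) = d x * y - x * d y)
    (h1 : d e1 = -(Real.pi • (e2 * e3)))
    (h2 : d e2 = Real.pi • (e1 * e3))
    (h3 : d e3 = 0) (h4 : d e4 = 0)
    -- the classes of e³, e⁴ are linearly independent in H¹_{dR}(M) = ℝ⟨e³,e⁴⟩:
    (hind : ∀ a c : ℝ, (∃ x ∈ F, d x = a • e3 + c • e4) → a = 0 ∧ c = 0) :
    d (e1 * e3 + e2 * e4) = (Real.pi • e4) * (e1 * e3 + e2 * e4) ∧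
    d (Real.pi • e4) = 0 ∧
    ¬ ∃ x ∈ F, d x = Real.pi • e4 := by

  have m1 : e1 ∈ ({e1, e2, e3, e4} : Set Ω) := by simp
  have m2 : e2 ∈ ({e1, e2, e3, e4} : Set Ω) := by simp
  have m3 : e3 ∈ ({e1, e2, e3, e4} : Set Ω) := by simp
  have m4 : e4 ∈ ({e1, e2, e3, e4} : Set Ω) := by simp
  have s3 : e3 * e3 = 0 := hsq e3 m3
  have s4 : e4 * e4 = 0 := hsq e4 m4
  have a41 : e4 * e1 = -(e1 * e4) := hanti e4 m4 e1 m1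
  have a43 : e4 * e3 = -(e3 * e4) := hanti e4 m4 e3 m3
  have a42 : e4 * e2 = -(e2 * e4) := hanti e4 m4 e2 m2
  refine ⟨?_, ?_, ?_⟩
  · have l13 : d (e1 * e3) = d e1 * e3 - e1 * d e3 := hleib e1 m1 e3 m3
    have l24 : d (e2 * e4) = d e2 * e4 - e2 * d e4 := hleib e2 m2 e4 m4
    have key : d (e1 * e3 + e2 * e4)
        = d e1 * e3 - e1 * d e3 + (d e2 * e4 - e2 * d e4) := by
      rw [map_add, l13, l24]
    rw [key, h1, h2, h3, h4]
    simp only [smul_mul_assoc, mul_smul_comm, mul_zero, sub_zero, mul_add]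
    rw [neg_mul, smul_mul_assoc, mul_assoc, s3, mul_zero, smul_zero, neg_zero, zero_add]
    have h413 : e4 * (e1 * e3) = e1 * e3 * e4 := by
      rw [← mul_assoc, a41, neg_mul, mul_assoc, a43, mul_neg, mul_assoc]
      exact neg_neg _
    have h424 : e4 * (e2 * e4) = 0 := by
      rw [← mul_assoc, a42, neg_mul, mul_assoc, s4, mul_zero, neg_zero]
    rw [h413, h424]
    simp [mul_assoc]
  · rw [map_smul, h4, smul_zero]
  · rintro ⟨x, hx, hdx⟩
    have := (hind 0 Real.pi ⟨x, hx, by rw [hdx, zero_smul, zero_add]⟩).2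
    exact Real.pi_ne_zero this
end

section
/- On a compact almost Hermitian manifold (M,J,g,ω) of real dimension 2n, there is a well-defined injective linear map from H^{p,q}_{BC} ∩ A^{p,q}_s into the Bott-Chern cohomology group H^{p,q}_{BC}(M) := (ker d ∩ A^{p,q}_s)/(∂∂̄ A^{p-1,q-1}_s), induced by the inclusion of harmonic representatives. -/
/-!
A Bott-Chern harmonic form `x` of type `(p,q)` lies in `ker ∂ ∩ ker ∂̄`, and on `A^{p,q}_s` also in
`ker μ ∩ ker μ̄`, so it is `d`-closed. The adjoint of `∂∂̄` is `∂̄*∂*`, which kills `x`; hence `x` is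
orthogonal to `im ∂∂̄`, and a harmonic form that is `∂∂̄`-exact has zero norm. Applied to the
difference of two harmonic forms with the same class, this gives injectivity.
-/

open LinearMap

section Adjoint

variable {𝕜 U V W : Type*} [RCLike 𝕜]
  [NormedAddCommGroup U] [InnerProductSpace 𝕜 U]
  [NormedAddCommGroup V] [InnerProductSpace 𝕜 V]
  [NormedAddCommGroup W] [InnerProductSpace 𝕜 W]

theorem inner_comp_apply_eq_inner_apply_comp {f : V →ₗ[𝕜] W} {f' : W →ₗ[𝕜] V}
    {g : U →ₗ[𝕜] V} {g' : V →ₗ[𝕜] U}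
    (hf : ∀ x y, inner 𝕜 (f x) y = inner 𝕜 x (f' y))
    (hg : ∀ x y, inner 𝕜 (g x) y = inner 𝕜 x (g' y)) (x : U) (y : W) :
    inner 𝕜 ((f ∘ₗ g) x) y = inner 𝕜 x ((g' ∘ₗ f') y) :=
  (hf _ _).trans (hg _ _)

theorem disjoint_range_ker_of_inner_apply_eq {f : V →ₗ[𝕜] W} {f' : W →ₗ[𝕜] V}
    (hf : ∀ x y, inner 𝕜 (f x) y = inner 𝕜 x (f' y)) :
    Disjoint (range f) (ker f') := by
  rw [Submodule.disjoint_def]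
  rintro _ ⟨z, rfl⟩ hz
  rw [← inner_self_eq_zero (𝕜 := 𝕜), hf, mem_ker.mp hz, inner_zero_right]

end Adjoint

theorem bc_harmonic_injects_into_bc_cohomology
    (V : Type*) [NormedAddCommGroup V] [InnerProductSpace ℂ V]
    (A : ℤ → ℤ → Submodule ℂ V) (p q : ℤ)
    (d mu del delbar mubar delSt delbarSt : V →ₗ[ℂ] V)
    (hd : d = mu + del + delbar + mubar)
    (hadj_del : ∀ x y : V, (inner ℂ (del x) y : ℂ) = inner ℂ x (delSt y))
    (hadj_delbar : ∀ x y : V, (inner ℂ (delbar x) y : ℂ) = inner ℂ x (delbarSt y)) :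
    let As : ℤ → ℤ → Submodule ℂ V := fun p' q' =>
      A p' q' ⊓ LinearMap.ker mubar ⊓ LinearMap.ker (delbar ∘ₗ delbar)
        ⊓ LinearMap.ker (del ∘ₗ del) ⊓ LinearMap.ker mu
    let HBC : Submodule ℂ V :=
      A p q ⊓ LinearMap.ker del ⊓ LinearMap.ker delbar
        ⊓ LinearMap.ker (delbarSt ∘ₗ delSt)
    let N : Submodule ℂ V := Submodule.map (del ∘ₗ delbar) (As (p - 1) (q - 1))
    (↑(HBC ⊓ As p q) : Set V) ⊆ ↑(LinearMap.ker d ⊓ As p q) ∧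
    Set.InjOn N.mkQ ↑(HBC ⊓ As p q) := by
  intro As HBC N
  constructor
  · rintro x ⟨⟨⟨⟨-, hdel⟩, hdelbar⟩, -⟩, hAs⟩
    have hmubar : mubar x = 0 := hAs.1.1.1.2
    have hmu : mu x = 0 := hAs.2
    refine ⟨?_, hAs⟩
    rw [SetLike.mem_coe, mem_ker, hd]
    simp only [LinearMap.add_apply, hmu, mem_ker.mp hdel, mem_ker.mp hdelbar, hmubar, add_zero]
  · have hN : N ≤ range (del ∘ₗ delbar) := map_le_range
    have hHBC : HBC ⊓ As p q ≤ ker (delbarSt ∘ₗ delSt) := inf_le_left.trans inf_le_right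
    have hdisj : Disjoint (HBC ⊓ As p q) (ker N.mkQ) := by
      rw [Submodule.ker_mkQ]
      exact (disjoint_range_ker_of_inner_apply_eq
        (inner_comp_apply_eq_inner_apply_comp hadj_del hadj_delbar)).symm.mono hHBC hN
    exact disjoint_ker_iff_injOn.mp hdisj
end
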